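/- Let 0 < α < 1/2. Then there exists a universal constant d'_α > 0 such that, for every discrete-time Markov transition kernel g with a stationary distribution π on a σ-compact metric state space, one has d'_α · t_H(α) ≤ t_L. -/

import Mathlib

/-!
Let `t` be such that `‖g_L^t(x,·) - π‖ ≤ 1/4` for all `x`. Then any two rows of `g_L^t` are
`1/2`-close, and since `‖μP - νP‖ ≤ (sup_{x,y} ‖P(x,·) - P(y,·)‖) · ‖μ - ν‖`, stationarity of `π`
gives `‖g_L^{Kt}(x,·) - π‖ ≤ 2^{-K}`. With `2^{-K} ≤ α/2`, every `A` with `π(A) ≥ α` has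
`g_L^{Kt}(x, A) ≥ α/2` from every `x`, so the lazy chain misses `A` during `n` blocks of `Kt` steps
with probability at most `(1 - α/2)^n`, and `E_x[τ_A] ≤ 2Kt/α`. The original chain hits `A` no
later than the lazy one, hence `t_H(α) ≤ (2K/α) t_L`.
-/

open MeasureTheory ENNReal

noncomputable section

namespace MixHit

variable {X : Type*} [MeasurableSpace X]

/-- Total variation distance between two Borel measures. -/
def tv (μ ν : Measure X) : ℝ≥0∞ :=
  ⨆ (A : Set X) (_ : MeasurableSet A), (μ A - ν A) ⊔ (ν A - μ A)

/-- `g` is a Markov transition kernel: each `g x` is a (Borel) probability measure,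
measurably in `x`. -/
def IsMarkov (g : X → Measure X) : Prop :=
  (∀ x, IsProbabilityMeasure (g x)) ∧
    ∀ A : Set X, MeasurableSet A → Measurable fun x => g x A

/-- `t`-step transition probabilities (`iterK g 0 x = δ_x`). -/
def iterK (g : X → Measure X) : ℕ → X → Measure X
  | 0 => fun x => Measure.dirac x
  | n + 1 => fun x => (g x).bind (iterK g n)

/-- `π` is a stationary distribution for `g`. -/
def Stationary (g : X → Measure X) (π : Measure X) : Prop :=
  ∀ A : Set X, MeasurableSet A → ∫⁻ x, g x A ∂π = π A

/-- `g` is reversible with respect to `π`. -/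
def Reversible (g : X → Measure X) (π : Measure X) : Prop :=
  ∀ A B : Set X, MeasurableSet A → MeasurableSet B →
    ∫⁻ x in A, g x B ∂π = ∫⁻ x in B, g x A ∂π

/-- The lazy kernel `g_L(x,·) = (1/2) g(x,·) + (1/2) δ_x`. -/
def lazy (g : X → Measure X) : X → Measure X := fun x =>
  (2 : ℝ≥0∞)⁻¹ • g x + (2 : ℝ≥0∞)⁻¹ • Measure.dirac x

/-- Mixing time `min {t : sup_x ‖g^t(x,·) − π‖ ≤ ε}`, as an element of `ℝ≥0∞`
(`⊤` if there is no such `t`). -/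
def mixTime (g : X → Measure X) (π : Measure X) (ε : ℝ≥0∞) : ℝ≥0∞ :=
  ⨅ (t : ℕ) (_ : ∀ x, tv (iterK g t x) π ≤ ε), (t : ℝ≥0∞)

/-- `d̄(t) = sup_{x,y} ‖g^t(x,·) − g^t(y,·)‖`. -/
def dbar (g : X → Measure X) (t : ℕ) : ℝ≥0∞ :=
  ⨆ (x : X) (y : X), tv (iterK g t x) (iterK g t y)

/-- Standardized mixing time `min {t : d̄(t) ≤ ε}` (`⊤` if there is no such `t`). -/
def stdMix (g : X → Measure X) (ε : ℝ≥0∞) : ℝ≥0∞ :=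
  ⨅ (t : ℕ) (_ : dbar g t ≤ ε), (t : ℝ≥0∞)

/-- `P_x(τ_A = t)` for the chain with kernel `g` started at `x`, where
`τ_A = min {t : X_t ∈ A}` (first-step recursion). -/
def hitEq (g : X → Measure X) (A : Set X) : ℕ → X → ℝ≥0∞
  | 0 => fun x => A.indicator (fun _ => 1) x
  | n + 1 => fun x => Aᶜ.indicator (fun x' => ∫⁻ y, hitEq g A n y ∂(g x')) x

/-- `P_x(τ_A ≤ t)`. -/
def hitLE (g : X → Measure X) (A : Set X) (t : ℕ) (x : X) : ℝ≥0∞ :=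
  ∑ s ∈ Finset.range (t + 1), hitEq g A s x

/-- `E_x[τ_A] = ∑_{t ≥ 0} P_x(τ_A > t)`. -/
def expHit (g : X → Measure X) (A : Set X) (x : X) : ℝ≥0∞ :=
  ∑' t : ℕ, (1 - hitLE g A t x)

/-- Maximum hitting time `t_H(α) = sup {E_x[τ_A] : x ∈ X, A Borel, π(A) ≥ α}`. -/
def maxHit (g : X → Measure X) (π : Measure X) (α : ℝ) : ℝ≥0∞ :=
  ⨆ (x : X) (A : Set X) (_ : MeasurableSet A) (_ : ENNReal.ofReal α ≤ π A),
    expHit g A x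

/-- Large hitting time
`τ_g(α) = min {t : inf {P_x(τ_A ≤ t) : x ∈ X, A Borel, π(A) ≥ α} > 0.9}`. -/
def largeHit (g : X → Measure X) (π : Measure X) (α : ℝ) : ℝ≥0∞ :=
  ⨅ (t : ℕ) (_ : (9 / 10 : ℝ≥0∞) <
      ⨅ (x : X) (A : Set X) (_ : MeasurableSet A) (_ : ENNReal.ofReal α ≤ π A),
        hitLE g A t x),
    (t : ℝ≥0∞)

/-- The strong Feller property: continuity of `x ↦ g(x,·)` in total variation. -/
def StrongFeller [PseudoMetricSpace X] (g : X → Measure X) : Prop :=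
  ∀ x : X, ∀ ε : ℝ, 0 < ε → ∃ δ : ℝ, 0 < δ ∧
    ∀ y : X, dist y x < δ → tv (g x) (g y) < ENNReal.ofReal ε

/-- Law of `X_t` on the event that `t` is the first time the chain lies in `S`. -/
def enterDist (g : X → Measure X) (S : Set X) : ℕ → X → Measure X
  | 0 => fun x => (Measure.dirac x).restrict S
  | n + 1 => fun x => Sᶜ.indicator (fun x' => (g x').bind (enterDist g S n)) x

/-- Law of the chain's position at its first entrance (at a time `≥ 0`) into `S`. -/
def hitMeasure (g : X → Measure X) (S : Set X) (x : X) : Measure X :=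
  Measure.sum fun t => enterDist g S t x

/-- One step of the trace of `g` on `S`: take one `g`-step, then run until the
first entrance into `S`. -/
def traceK (g : X → Measure X) (S : Set X) : X → Measure X :=
  fun x => (g x).bind (hitMeasure g S)

/-- The trace of `g` on `S`, viewed as a kernel on the subtype `S`. -/
def traceSub (g : X → Measure X) (S : Set X) : S → Measure S :=
  fun x => (traceK g S (x : X)).comap (Subtype.val)

/-- Normalization of `π` to `S`, as a measure on the subtype `S`. -/
def normSub (π : Measure X) (S : Set X) : Measure S :=
  (π S)⁻¹ • π.comap (Subtype.val : S → X)

/-- Ergodicity: from every starting point, the chain converges to `π`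
in total variation. -/
def ErgodicK (g : X → Measure X) (π : Measure X) : Prop :=
  Stationary g π ∧
    ∀ x : X, Filter.Tendsto (fun t => tv (iterK g t x) π) Filter.atTop (nhds 0)

theorem tv_comm (μ ν : Measure X) : tv μ ν = tv ν μ := by
  simp only [tv, sup_comm]

theorem le_add_tv {μ ν : Measure X} {A : Set X} (hA : MeasurableSet A) :
    μ A ≤ ν A + tv μ ν :=
  tsub_le_iff_left.1 <|
    le_iSup₂_of_le (f := fun A (_ : MeasurableSet A) => (μ A - ν A) ⊔ (ν A - μ A)) A hA
      le_sup_left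

theorem tv_le_of_forall_le_add {μ ν : Measure X} {c : ℝ≥0∞}
    (h : ∀ A, MeasurableSet A → μ A ≤ ν A + c ∧ ν A ≤ μ A + c) : tv μ ν ≤ c :=
  iSup₂_le fun A hA => sup_le (tsub_le_iff_left.2 (h A hA).1) (tsub_le_iff_left.2 (h A hA).2)

theorem tv_le_one (μ ν : Measure X) [IsProbabilityMeasure μ] [IsProbabilityMeasure ν] :
    tv μ ν ≤ 1 :=
  tv_le_of_forall_le_add fun _ _ => ⟨prob_le_one.trans le_add_self, prob_le_one.trans le_add_self⟩

theorem tv_triangle (μ ν ρ : Measure X) : tv μ ρ ≤ tv μ ν + tv ν ρ := by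
  refine tv_le_of_forall_le_add fun A hA => ⟨?_, ?_⟩
  · calc μ A ≤ ν A + tv μ ν := le_add_tv hA
      _ ≤ ρ A + tv ν ρ + tv μ ν := by gcongr; exact le_add_tv hA
      _ = ρ A + (tv μ ν + tv ν ρ) := by ring
  · calc ρ A ≤ ν A + tv ν ρ := tv_comm ν ρ ▸ le_add_tv hA
      _ ≤ μ A + tv μ ν + tv ν ρ := by gcongr; exact tv_comm μ ν ▸ le_add_tv hA
      _ = μ A + (tv μ ν + tv ν ρ) := by ring

/-- Layer cake: `∫ h dμ - ∫ h dν = ∫₀^D (μ{h > s} - ν{h > s}) ds`. -/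
theorem lintegral_le_lintegral_add_mul_tv {μ ν : Measure X} {h : X → ℝ≥0∞}
    (hh : Measurable h) {D : ℝ≥0∞} (hD : D ≠ ∞) (hhD : ∀ x, h x ≤ D) :
    ∫⁻ x, h x ∂μ ≤ ∫⁻ x, h x ∂ν + D * tv μ ν := by
  have hfin : ∀ x, h x ≠ ∞ := fun x => ne_top_of_le_ne_top hD (hhD x)
  have hcake : ∀ ρ : Measure X,
      ∫⁻ x, h x ∂ρ = ∫⁻ s in Set.Ioi 0, ρ {x | s < (h x).toReal} := fun ρ => by
    simpa only [ofReal_toReal (hfin _)] using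
      lintegral_eq_lintegral_meas_lt ρ (Filter.Eventually.of_forall fun x => toReal_nonneg)
        hh.ennreal_toReal.aemeasurable
  have hlevel : ∀ s : ℝ, μ {x | s < (h x).toReal}
      ≤ ν {x | s < (h x).toReal} + (Set.Iio D.toReal).indicator (fun _ => tv μ ν) s := by
    intro s
    by_cases hs : s < D.toReal
    · rw [Set.indicator_of_mem (Set.mem_Iio.2 hs)]
      exact le_add_tv (measurableSet_lt measurable_const hh.ennreal_toReal)
    · have : {x | s < (h x).toReal} = ∅ := Set.eq_empty_of_forall_notMem fun x hx =>
        hs (hx.trans_le (toReal_mono hD (hhD x)))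
      simp [this]
  calc ∫⁻ x, h x ∂μ
      ≤ ∫⁻ s in Set.Ioi 0, (ν {x | s < (h x).toReal}
          + (Set.Iio D.toReal).indicator (fun _ => tv μ ν) s) := by
        rw [hcake]; exact lintegral_mono hlevel
    _ = ∫⁻ x, h x ∂ν + D * tv μ ν := by
        rw [lintegral_add_right _ (measurable_const.indicator measurableSet_Iio), hcake,
          lintegral_indicator_const measurableSet_Iio, Measure.restrict_apply measurableSet_Iio,
          Set.Iio_inter_Ioi, Real.volume_Ioo, sub_zero, ofReal_toReal hD, mul_comm]

theorem lintegral_le_lintegral_add_mul_tv_of_le_add {μ ν : Measure X}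
    (hμν : μ Set.univ = ν Set.univ) {f : X → ℝ≥0∞} (hf : Measurable f) {D : ℝ≥0∞}
    (hD : D ≠ ∞) (hfD : ∀ x y, f x ≤ f y + D) :
    ∫⁻ x, f x ∂μ ≤ ∫⁻ x, f x ∂ν + D * tv μ ν := by
  set c := ⨅ y, f y
  have hsplit : ∀ ρ : Measure X, ∫⁻ x, f x ∂ρ = c * ρ Set.univ + ∫⁻ x, (f x - c) ∂ρ := by
    intro ρ
    rw [← lintegral_const, ← lintegral_add_left measurable_const]
    exact lintegral_congr fun x => (add_tsub_cancel_of_le (iInf_le f x)).symm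
  have hosc : ∀ x, f x - c ≤ D := fun x => by
    rw [ENNReal.sub_iInf]; exact iSup_le fun y => tsub_le_iff_left.2 (hfD x y)
  rw [hsplit μ, hsplit ν, hμν, add_assoc]
  gcongr
  exact lintegral_le_lintegral_add_mul_tv (hf.sub measurable_const) hD hosc

theorem tv_bind_le {μ ν : Measure X} (hμν : μ Set.univ = ν Set.univ) {Q : X → Measure X}
    (hQ : Measurable Q) {D : ℝ≥0∞} (hD : D ≠ ∞) (hQD : ∀ x y, tv (Q x) (Q y) ≤ D) :
    tv (μ.bind Q) (ν.bind Q) ≤ D * tv μ ν := by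
  refine tv_le_of_forall_le_add fun A hA => ?_
  have hQA : Measurable fun x => Q x A := Measure.measurable_coe hA |>.comp hQ
  have hosc : ∀ x y, Q x A ≤ Q y A + D := fun x y =>
    (le_add_tv hA).trans (by gcongr; exact hQD x y)
  rw [Measure.bind_apply hA hQ.aemeasurable, Measure.bind_apply hA hQ.aemeasurable]
  exact ⟨lintegral_le_lintegral_add_mul_tv_of_le_add hμν hQA hD hosc,
    tv_comm μ ν ▸ lintegral_le_lintegral_add_mul_tv_of_le_add hμν.symm hQA hD hosc⟩

theorem IsMarkov.measurable {g : X → Measure X} (hg : IsMarkov g) : Measurable g :=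
  Measure.measurable_measure.2 hg.2

theorem measurable_iterK {g : X → Measure X} (hg : Measurable g) (n : ℕ) :
    Measurable (iterK g n) := by
  induction n with
  | zero => exact Measure.measurable_dirac
  | succ n ih => exact (Measure.measurable_bind' ih).comp hg

theorem iterK_isProbabilityMeasure {g : X → Measure X} (hg : IsMarkov g) (n : ℕ) (x : X) :
    IsProbabilityMeasure (iterK g n x) := by
  induction n generalizing x with
  | zero => exact Measure.dirac.isProbabilityMeasure
  | succ n ih =>
    have := hg.1 x
    exact isProbabilityMeasure_bind (measurable_iterK hg.measurable n).aemeasurable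
      (Filter.Eventually.of_forall ih)

theorem iterK_add {g : X → Measure X} (hg : Measurable g) (m n : ℕ) (x : X) :
    iterK g (m + n) x = (iterK g m x).bind (iterK g n) := by
  induction m generalizing x with
  | zero => rw [Nat.zero_add]; exact (Measure.dirac_bind (measurable_iterK hg n) x).symm
  | succ m ih =>
    rw [Nat.succ_add]
    change (g x).bind (iterK g (m + n)) = ((g x).bind (iterK g m)).bind (iterK g n)
    rw [funext ih, Measure.bind_bind (measurable_iterK hg m).aemeasurable
      (measurable_iterK hg n).aemeasurable]

theorem Stationary.bind_eq {g : X → Measure X} {π : Measure X} (hs : Stationary g π)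
    (hg : Measurable g) : π.bind g = π :=
  Measure.ext fun A hA => by rw [Measure.bind_apply hA hg.aemeasurable, hs A hA]

theorem Stationary.bind_iterK {g : X → Measure X} {π : Measure X} (hs : Stationary g π)
    (hg : Measurable g) (n : ℕ) : π.bind (iterK g n) = π := by
  induction n with
  | zero => exact Measure.bind_dirac
  | succ n ih =>
    change π.bind (fun x => (g x).bind (iterK g n)) = π
    rw [← Measure.bind_bind hg.aemeasurable (measurable_iterK hg n).aemeasurable,
      hs.bind_eq hg, ih]

theorem tv_iterK_mul_le {g : X → Measure X} {π : Measure X} [IsProbabilityMeasure π]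
    (hg : IsMarkov g) (hs : Stationary g π) {t : ℕ} (ht : ∀ x, tv (iterK g t x) π ≤ 1 / 4)
    (k : ℕ) (x : X) : tv (iterK g (k * t) x) π ≤ (1 / 2) ^ k := by
  induction k with
  | zero =>
    have := iterK_isProbabilityMeasure hg 0 x
    simpa using tv_le_one (iterK g 0 x) π
  | succ k ih =>
    have hrows : ∀ y z, tv (iterK g t y) (iterK g t z) ≤ 1 / 2 := fun y z =>
      calc tv (iterK g t y) (iterK g t z) ≤ tv (iterK g t y) π + tv π (iterK g t z) :=
            tv_triangle _ _ _
        _ ≤ 1 / 4 + 1 / 4 := add_le_add (ht y) (tv_comm π _ ▸ ht z)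
        _ = 1 / 2 := by rw [ENNReal.div_add_div_same, ENNReal.div_eq_div_iff] <;> norm_num
    have := iterK_isProbabilityMeasure hg (k * t) x
    calc tv (iterK g ((k + 1) * t) x) π
        = tv ((iterK g (k * t) x).bind (iterK g t)) (π.bind (iterK g t)) := by
          rw [Nat.succ_mul, iterK_add hg.measurable, hs.bind_iterK hg.measurable]
      _ ≤ 1 / 2 * tv (iterK g (k * t) x) π :=
          tv_bind_le (by simp) (measurable_iterK hg.measurable t) (by simp) hrows
      _ ≤ (1 / 2) ^ (k + 1) := by rw [pow_succ']; gcongr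

theorem _root_.MeasureTheory.lintegral_one_sub {μ : Measure X} [IsProbabilityMeasure μ]
    {f : X → ℝ≥0∞} (hf : Measurable f) (hf1 : ∀ x, f x ≤ 1) :
    ∫⁻ x, (1 - f x) ∂μ = 1 - ∫⁻ x, f x ∂μ := by
  have hfin : ∫⁻ x, f x ∂μ ≠ ∞ :=
    ne_top_of_le_ne_top one_ne_top ((lintegral_mono hf1).trans_eq (by simp))
  rw [lintegral_sub hf hfin (Filter.Eventually.of_forall hf1)]
  simp

theorem _root_.ENNReal.tsum_comp_div (f : ℕ → ℝ≥0∞) {s : ℕ} (hs : s ≠ 0) :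
    ∑' j, f (j / s) = s * ∑' q, f q := by
  have : NeZero s := ⟨hs⟩
  calc ∑' j, f (j / s) = ∑' p : ℕ × Fin s, f p.1 := by
        rw [← (Nat.divModEquiv s).symm.tsum_eq]
        refine tsum_congr fun p => congrArg f ?_
        change (p.1 * s + p.2) / s = p.1
        rw [Nat.add_comm, Nat.add_mul_div_right _ _ (Nat.pos_of_ne_zero hs),
          Nat.div_eq_of_lt p.2.is_lt, Nat.zero_add]
    _ = s * ∑' q, f q := by
        rw [ENNReal.tsum_prod (f := fun q (_ : Fin s) => f q), ← ENNReal.tsum_mul_left]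
        simp [tsum_fintype]

section Hitting

variable {g : X → Measure X} {A : Set X}

theorem measurable_hitEq (hg : Measurable g) (hA : MeasurableSet A) (n : ℕ) :
    Measurable (hitEq g A n) := by
  induction n with
  | zero => exact measurable_const.indicator hA
  | succ n ih => exact ((Measure.measurable_lintegral ih).comp hg).indicator hA.compl

theorem measurable_hitLE (hg : Measurable g) (hA : MeasurableSet A) (t : ℕ) :
    Measurable (hitLE g A t) :=
  Finset.measurable_sum _ fun s _ => measurable_hitEq hg hA s

theorem hitLE_of_mem {x : X} (hx : x ∈ A) (t : ℕ) : hitLE g A t x = 1 := by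
  induction t with
  | zero => simp [hitLE, hitEq, hx]
  | succ t ih =>
    rw [hitLE, Finset.sum_range_succ, ← hitLE, ih]
    simp [hitEq, hx]

theorem hitLE_succ_of_notMem (hg : Measurable g) (hA : MeasurableSet A) {x : X} (hx : x ∉ A)
    (t : ℕ) : hitLE g A (t + 1) x = ∫⁻ y, hitLE g A t y ∂g x := by
  unfold hitLE
  rw [Finset.sum_range_succ', lintegral_finsetSum _ fun i _ => measurable_hitEq hg hA i]
  simp only [hitEq, Set.indicator_of_notMem hx, add_zero,
    Set.indicator_of_mem (Set.mem_compl hx)]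

theorem hitLE_mono (x : X) : Monotone fun t => hitLE g A t x := fun _ _ hst =>
  Finset.sum_le_sum_of_subset (Finset.range_subset_range.2 (Nat.succ_le_succ hst))

theorem hitLE_le_one (hg : IsMarkov g) (hA : MeasurableSet A) (t : ℕ) (x : X) :
    hitLE g A t x ≤ 1 := by
  induction t generalizing x with
  | zero => simpa [hitLE, hitEq] using Set.indicator_le_self' (fun _ _ => zero_le_one) x
  | succ t ih =>
    by_cases hx : x ∈ A
    · rw [hitLE_of_mem hx]
    · have := hg.1 x
      rw [hitLE_succ_of_notMem hg.measurable hA hx]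
      exact (lintegral_mono ih).trans_eq (by simp)

theorem one_sub_hitLE_add_le (hg : IsMarkov g) (hA : MeasurableSet A) (m s : ℕ) (x : X) :
    1 - hitLE g A (m + s) x ≤ ∫⁻ y, (1 - hitLE g A m y) ∂iterK g s x := by
  induction s generalizing x with
  | zero =>
    exact (lintegral_dirac' x (measurable_const.sub (measurable_hitLE hg.measurable hA m))).ge
  | succ s ih =>
    by_cases hx : x ∈ A
    · simp [hitLE_of_mem hx]
    · have := hg.1 x
      calc 1 - hitLE g A (m + s + 1) x = ∫⁻ y, (1 - hitLE g A (m + s) y) ∂g x := by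
            rw [hitLE_succ_of_notMem hg.measurable hA hx,
              lintegral_one_sub (measurable_hitLE hg.measurable hA _) (hitLE_le_one hg hA _)]
        _ ≤ ∫⁻ y, ∫⁻ z, (1 - hitLE g A m z) ∂iterK g s y ∂g x := lintegral_mono ih
        _ = ∫⁻ z, (1 - hitLE g A m z) ∂iterK g (s + 1) x :=
            (Measure.lintegral_bind (measurable_iterK hg.measurable s).aemeasurable
              (measurable_const.sub (measurable_hitLE hg.measurable hA m)).aemeasurable).symm

theorem one_sub_hitLE_mul_le (hg : IsMarkov g) (hA : MeasurableSet A) {s : ℕ} {γ : ℝ≥0∞}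
    (hγ : ∀ x, γ ≤ iterK g s x A) (n : ℕ) (x : X) :
    1 - hitLE g A (n * s) x ≤ (1 - γ) ^ n := by
  induction n generalizing x with
  | zero => simp
  | succ n ih =>
    have := iterK_isProbabilityMeasure hg s x
    calc 1 - hitLE g A ((n + 1) * s) x
        ≤ ∫⁻ y, (1 - hitLE g A (n * s) y) ∂iterK g s x := by
          rw [Nat.succ_mul]; exact one_sub_hitLE_add_le hg hA _ _ x
      _ ≤ ∫⁻ y, Aᶜ.indicator (fun _ => (1 - γ) ^ n) y ∂iterK g s x := by
          refine lintegral_mono fun y => ?_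
          by_cases hy : y ∈ A
          · simp [hitLE_of_mem hy]
          · rw [Set.indicator_of_mem (Set.mem_compl hy)]; exact ih y
      _ = (1 - γ) ^ n * (1 - iterK g s x A) := by
          rw [lintegral_indicator_const hA.compl, prob_compl_eq_one_sub hA]
      _ ≤ (1 - γ) ^ (n + 1) := by rw [pow_succ]; gcongr; exact hγ x

theorem expHit_le_of_forall_le_iterK (hg : IsMarkov g) (hA : MeasurableSet A) {s : ℕ}
    {γ : ℝ≥0∞} (hγ0 : γ ≠ 0) (hγ : ∀ x, γ ≤ iterK g s x A) (x : X) :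
    expHit g A x ≤ s * γ⁻¹ := by
  have := iterK_isProbabilityMeasure hg s x
  have hγ1 : γ ≤ 1 := (hγ x).trans prob_le_one
  rcases eq_or_ne s 0 with rfl | hs
  · have hx : x ∈ A := by
      by_contra hx
      simpa [iterK, Measure.dirac_apply' x hA, hx, hγ0] using hγ x
    simp [expHit, hitLE_of_mem hx]
  calc expHit g A x ≤ ∑' j, (1 - γ) ^ (j / s) := ENNReal.tsum_le_tsum fun j =>
        (tsub_le_tsub_left (hitLE_mono x (Nat.div_mul_le_self j s)) 1).trans
          (one_sub_hitLE_mul_le hg hA hγ _ x)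
    _ = s * γ⁻¹ := by
        rw [ENNReal.tsum_comp_div _ hs, ENNReal.tsum_geometric,
          ENNReal.sub_sub_cancel one_ne_top hγ1]

end Hitting

section Lazy

variable {g : X → Measure X}

theorem lazy_apply (x : X) {A : Set X} (hA : MeasurableSet A) :
    lazy g x A = 2⁻¹ * g x A + 2⁻¹ * A.indicator 1 x := by
  simp [lazy, Measure.dirac_apply' x hA]

theorem IsMarkov.lazy (hg : IsMarkov g) : IsMarkov (lazy g) := by
  refine ⟨fun x => ⟨?_⟩, fun A hA => ?_⟩
  · have := hg.1 x
    simp [lazy_apply x MeasurableSet.univ, ENNReal.inv_two_add_inv_two]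
  · simp_rw [lazy_apply _ hA]
    exact (measurable_const.mul (hg.2 A hA)).add
      (measurable_const.mul (measurable_one.indicator hA))

theorem Stationary.lazy {π : Measure X} (hs : Stationary g π) (hg : IsMarkov g) :
    Stationary (lazy g) π := by
  intro A hA
  simp_rw [lazy_apply _ hA]
  rw [lintegral_add_left (f := fun x => 2⁻¹ * g x A) ((hg.2 A hA).const_mul _),
    lintegral_const_mul _ (hg.2 A hA), lintegral_const_mul _ (measurable_one.indicator hA),
    hs A hA, lintegral_indicator_one hA, ← add_mul, ENNReal.inv_two_add_inv_two, one_mul]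

/-- The lazy chain hits `A` no sooner than the original one: a lazy step from `x ∉ A` is an
average of a `g`-step and of staying at `x`, which is no better than a `g`-step. -/
theorem hitLE_lazy_le (hg : IsMarkov g) {A : Set X} (hA : MeasurableSet A) (t : ℕ) (x : X) :
    hitLE (lazy g) A t x ≤ hitLE g A t x := by
  induction t generalizing x with
  | zero => rfl
  | succ t ih =>
    by_cases hx : x ∈ A
    · rw [hitLE_of_mem hx, hitLE_of_mem hx]
    rw [hitLE_succ_of_notMem hg.lazy.measurable hA hx, hitLE_succ_of_notMem hg.measurable hA hx,
      lazy, lintegral_add_measure, lintegral_smul_measure, lintegral_smul_measure,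
      lintegral_dirac' x (measurable_hitLE hg.lazy.measurable hA t)]
    calc 2⁻¹ * ∫⁻ y, hitLE (lazy g) A t y ∂g x + 2⁻¹ * hitLE (lazy g) A t x
        ≤ 2⁻¹ * ∫⁻ y, hitLE g A t y ∂g x + 2⁻¹ * hitLE g A t x := by
          gcongr with y
          · exact ih y
          · exact ih x
      _ ≤ 2⁻¹ * ∫⁻ y, hitLE g A t y ∂g x + 2⁻¹ * ∫⁻ y, hitLE g A t y ∂g x := by
          rw [← hitLE_succ_of_notMem hg.measurable hA hx]
          gcongr
          exact hitLE_mono x t.le_succ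
      _ = ∫⁻ y, hitLE g A t y ∂g x := by rw [← add_mul, ENNReal.inv_two_add_inv_two, one_mul]

theorem expHit_le_expHit_lazy (hg : IsMarkov g) {A : Set X} (hA : MeasurableSet A) (x : X) :
    expHit g A x ≤ expHit (lazy g) A x :=
  ENNReal.tsum_le_tsum fun t => tsub_le_tsub_left (hitLE_lazy_le hg hA t x) 1

end Lazy

theorem maxHit_le_of_tv_iterK_lazy_le {g : X → Measure X} {π : Measure X}
    [IsProbabilityMeasure π] (hg : IsMarkov g) (hs : Stationary g π) {t : ℕ}
    (ht : ∀ x, tv (iterK (lazy g) t x) π ≤ 1 / 4) {α : ℝ} {K : ℕ} {γ : ℝ≥0∞} (hγ : γ ≠ 0)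
    (hKγ : (1 / 2) ^ K + γ ≤ ENNReal.ofReal α) :
    maxHit g π α ≤ K * t / γ := by
  refine iSup_le fun x => iSup₂_le fun A hA => iSup_le fun hπA => ?_
  have hγA : ∀ y, γ ≤ iterK (lazy g) (K * t) y A := fun y =>
    (ENNReal.add_le_add_iff_left (by simp)).1 <|
      calc (1 / 2) ^ K + γ ≤ π A := hKγ.trans hπA
        _ ≤ iterK (lazy g) (K * t) y A + tv π (iterK (lazy g) (K * t) y) := le_add_tv hA
        _ ≤ (1 / 2) ^ K + iterK (lazy g) (K * t) y A := by
          rw [add_comm, tv_comm]; gcongr; exact tv_iterK_mul_le hg.lazy (hs.lazy hg) ht K y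
  calc expHit g A x ≤ expHit (lazy g) A x := expHit_le_expHit_lazy hg hA x
    _ ≤ (K * t : ℕ) * γ⁻¹ := expHit_le_of_forall_le_iterK hg.lazy hA hγ hγA x
    _ = K * t / γ := by push_cast; rfl

theorem stmt3_general (α : ℝ) (hα0 : 0 < α) :
    ∃ d' : ℝ, 0 < d' ∧
      ∀ (X : Type) [MetricSpace X] [MeasurableSpace X] [BorelSpace X]
        [SigmaCompactSpace X] (g : X → Measure X) (π : Measure X),
        IsMarkov g → IsProbabilityMeasure π → Stationary g π →
        ENNReal.ofReal d' * maxHit g π α ≤ mixTime (lazy g) π (1 / 4) := by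
  set γ := ENNReal.ofReal α / 2
  have hγ : γ ≠ 0 := (ENNReal.half_pos (ENNReal.ofReal_pos.2 hα0).ne').ne'
  obtain ⟨K, hK⟩ := ENNReal.exists_inv_two_pow_lt hγ
  have hKγ : (1 / 2) ^ (K + 1) + γ ≤ ENNReal.ofReal α := by
    rw [← ENNReal.add_halves (ENNReal.ofReal α), one_div]
    gcongr
    exact (pow_le_pow_right_of_le_one' (by norm_num) K.le_succ).trans hK.le
  refine ⟨α / 2 / (K + 1), by positivity, fun X _ _ _ _ g π hg hπ hs => le_iInf₂ fun t ht => ?_⟩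
  have hd' : ENNReal.ofReal (α / 2 / (K + 1)) = γ / (K + 1 : ℕ) := by
    rw [ENNReal.ofReal_div_of_pos (by positivity), ENNReal.ofReal_div_of_pos two_pos]
    norm_cast
  calc ENNReal.ofReal (α / 2 / (K + 1)) * maxHit g π α
      ≤ γ / (K + 1 : ℕ) * ((K + 1 : ℕ) * t / γ) := by
        rw [hd']; gcongr; exact maxHit_le_of_tv_iterK_lazy_le hg hs ht hγ hKγ
    _ = (γ * γ⁻¹) * (((K + 1 : ℕ) : ℝ≥0∞)⁻¹ * (K + 1 : ℕ)) * t := by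
        simp only [div_eq_mul_inv]; ring
    _ = t := by
        rw [ENNReal.mul_inv_cancel hγ (ENNReal.div_ne_top ofReal_ne_top two_ne_zero),
          ENNReal.inv_mul_cancel (by simp) (by simp), one_mul, one_mul]

/-- the maximum hitting time is bounded by a universal multiple of
the lazy mixing time, for any chain with a stationary distribution. -/
theorem stmt3 (α : ℝ) (hα0 : 0 < α) (hα1 : α < 1 / 2) :
    ∃ d' : ℝ, 0 < d' ∧
      ∀ (X : Type) [MetricSpace X] [MeasurableSpace X] [BorelSpace X]
        [SigmaCompactSpace X] (g : X → Measure X) (π : Measure X),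
        IsMarkov g → IsProbabilityMeasure π → Stationary g π →
        ENNReal.ofReal d' * maxHit g π α ≤ mixTime (lazy g) π (1 / 4) :=
  stmt3_general α hα0

end MixHit
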